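/- Let ρ(a,x) = (Ω_r + (Ω_m + δμ(a,x)) a + (Ω_Λ + g(a)) a⁴)/a⁴ · ρ_c with δμ bounded, Ω_r ≠ 0, g bounded near 0, and let ⟨ρ⟩(a) denote the same expression with δμ replaced by its bounded mean ⟨δμ⟩(a). Then the density contrast δ(a,x) = (ρ(a,x) - ⟨ρ⟩(a))/⟨ρ⟩(a) satisfies |δ(a,x)| ≤ C·a for a constant C and all sufficiently small a > 0; in particular δ(a,x) → 0 as a → 0⁺ uniformly in x. -/
import Mathlib


open Set

/-- Early homogenization: with `ρ = ρ_c (Ω_r + (Ω_m + δμ(a,x)) a + (Ω_Λ + g(a)) a⁴)/a⁴`,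
`δμ` uniformly bounded, `Ω_r ≠ 0` and `g` bounded near `0`, the density contrast
`δ = (ρ - ⟨ρ⟩)/⟨ρ⟩` satisfies `|δ(a,x)| ≤ C a` for all small `a > 0`. -/
theorem density_contrast_early_homogenization
    (X : Type*) (ρc ΩΛ Ωm Ωr : ℝ) (hΩr : Ωr ≠ 0)
    (δμ : ℝ → X → ℝ) (mδμ g : ℝ → ℝ)
    (M : ℝ) (hδμ : ∀ a > (0 : ℝ), ∀ x, |δμ a x| ≤ M)
    (hmδμ : ∀ a > (0 : ℝ), |mδμ a| ≤ M)
    (Mg a₁ : ℝ) (ha₁ : 0 < a₁) (hg : ∀ a ∈ Ioo (0 : ℝ) a₁, |g a| ≤ Mg) :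
    ∃ C > (0 : ℝ), ∃ a₂ > (0 : ℝ), ∀ a : ℝ, 0 < a → a < a₂ → ∀ x : X,
      |(((Ωr + (Ωm + δμ a x) * a + (ΩΛ + g a) * a ^ 4) / a ^ 4 * ρc) -
          ((Ωr + (Ωm + mδμ a) * a + (ΩΛ + g a) * a ^ 4) / a ^ 4 * ρc)) /
        ((Ωr + (Ωm + mδμ a) * a + (ΩΛ + g a) * a ^ 4) / a ^ 4 * ρc)| ≤ C * a := by
  have hM : 0 ≤ M := le_trans (abs_nonneg _) (hmδμ 1 one_pos)
  have hΩr' : 0 < |Ωr| := abs_pos.mpr hΩr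
  set K : ℝ := |Ωm| + M + |ΩΛ| + |Mg| + 1 with hKdef
  have hK : 0 < K := by positivity
  refine ⟨4 * (M + 1) / |Ωr|, by positivity,
    min a₁ (min 1 (|Ωr| / (2 * K))), by positivity, ?_⟩
  intro a ha haa x
  have ha1 : a < a₁ := lt_of_lt_of_le haa (min_le_left _ _)
  have ha2 : a < 1 := lt_of_lt_of_le haa ((min_le_right _ _).trans (min_le_left _ _))
  have ha3 : a ≤ |Ωr| / (2 * K) :=
    le_of_lt (lt_of_lt_of_le haa ((min_le_right _ _).trans (min_le_right _ _)))
  have hg' : |g a| ≤ Mg := hg a ⟨ha, ha1⟩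
  have hgabs : |g a| ≤ |Mg| := hg'.trans (le_abs_self Mg)
  have hδ' : |δμ a x| ≤ M := hδμ a ha x
  have hm' : |mδμ a| ≤ M := hmδμ a ha
  have ha4 : a ^ 4 ≤ a := by
    calc a ^ 4 ≤ a ^ 1 := pow_le_pow_of_le_one ha.le ha2.le (by norm_num)
      _ = a := pow_one a
  have hKa : K * a ≤ |Ωr| / 2 := by
    have := (le_div_iff₀ (by positivity : (0:ℝ) < 2 * K)).mp ha3
    nlinarith
  have hbound : |(Ωm + mδμ a) * a + (ΩΛ + g a) * a ^ 4| ≤ |Ωr| / 2 := by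
    have h1 : |(Ωm + mδμ a) * a| ≤ (|Ωm| + M) * a := by
      rw [abs_mul, abs_of_pos ha]
      exact mul_le_mul_of_nonneg_right ((abs_add_le _ _).trans (by linarith)) ha.le
    have h2 : |(ΩΛ + g a) * a ^ 4| ≤ (|ΩΛ| + |Mg|) * a := by
      rw [abs_mul, abs_of_pos (by positivity : (0:ℝ) < a ^ 4)]
      have h3 : |ΩΛ + g a| ≤ |ΩΛ| + |Mg| := (abs_add_le _ _).trans (by linarith)
      have h4 : (0:ℝ) ≤ |ΩΛ| + |Mg| := by positivity
      nlinarith [abs_nonneg (ΩΛ + g a), pow_pos ha 4]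
    calc |(Ωm + mδμ a) * a + (ΩΛ + g a) * a ^ 4|
        ≤ (|Ωm| + M) * a + (|ΩΛ| + |Mg|) * a := (abs_add_le _ _).trans (by linarith)
      _ ≤ K * a := by rw [hKdef]; nlinarith
      _ ≤ |Ωr| / 2 := hKa
  set Nm : ℝ := Ωr + (Ωm + mδμ a) * a + (ΩΛ + g a) * a ^ 4 with hNmdef
  have hNm : |Ωr| / 2 ≤ |Nm| := by
    have h5 : |Ωr| ≤ |Nm| + |(Ωm + mδμ a) * a + (ΩΛ + g a) * a ^ 4| := by
      calc |Ωr| = |Nm + -((Ωm + mδμ a) * a + (ΩΛ + g a) * a ^ 4)| := by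
            rw [hNmdef]; ring_nf
        _ ≤ |Nm| + |(Ωm + mδμ a) * a + (ΩΛ + g a) * a ^ 4| := by
            refine (abs_add_le _ _).trans ?_
            rw [abs_neg]
    linarith
  have hNm0 : Nm ≠ 0 := by
    intro h
    rw [h, abs_zero] at hNm
    linarith
  have ha0 : a ≠ 0 := ne_of_gt ha
  rcases eq_or_ne ρc 0 with hρ | hρ
  · simp only [hρ, mul_zero, sub_zero, div_zero, abs_zero]
    positivity
  · have key : (((Ωr + (Ωm + δμ a x) * a + (ΩΛ + g a) * a ^ 4) / a ^ 4 * ρc) -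
          (Nm / a ^ 4 * ρc)) / (Nm / a ^ 4 * ρc)
        = (δμ a x - mδμ a) * a / Nm := by
      field_simp
      ring
    rw [hNmdef] at key
    rw [key, abs_div, abs_mul, abs_of_pos ha]
    rw [← hNmdef]
    have hnum : |δμ a x - mδμ a| ≤ 2 * M := (abs_sub _ _).trans (by linarith)
    calc |δμ a x - mδμ a| * a / |Nm|
        ≤ (2 * M) * a / (|Ωr| / 2) := by
          apply div_le_div₀ (by positivity) (by nlinarith) (by linarith) hNm
      _ = 4 * M / |Ωr| * a := by field_simp; ring
      _ ≤ 4 * (M + 1) / |Ωr| * a := by gcongr; linarith
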